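/- Let (H,α) be a monoidal Hom-Hopf algebra over a commutative ring k and let (M,μ) be a left-covariant (H,α)-Hom-bimodule with left coaction ρ(m)=m₍₋₁₎⊗m₍₀₎. Define P_L:M→M by P_L(m)=S(m₍₋₁₎)·m₍₀₎. Then P_L(m) is a left coinvariant for every m∈M, i.e. ρ(P_L(m)) = 1⊗μ⁻¹(P_L(m)). -/
import Mathlib


open TensorProduct

noncomputable def tmul2 {k A B C D E F : Type*} [CommRing k]
    [AddCommGroup A] [AddCommGroup B] [AddCommGroup C] [AddCommGroup D]
    [AddCommGroup E] [AddCommGroup F]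
    [Module k A] [Module k B] [Module k C] [Module k D] [Module k E] [Module k F]
    (f : A →ₗ[k] C →ₗ[k] E) (g : B →ₗ[k] D →ₗ[k] F) :
    (A ⊗[k] B) →ₗ[k] (C ⊗[k] D) →ₗ[k] (E ⊗[k] F) :=
  TensorProduct.curry
    ((TensorProduct.map (TensorProduct.lift f) (TensorProduct.lift g)) ∘ₗ
      (TensorProduct.tensorTensorTensorComm k A B C D).toLinearMap)

theorem tmul2_tmul {k A B C D E F : Type*} [CommRing k]
    [AddCommGroup A] [AddCommGroup B] [AddCommGroup C] [AddCommGroup D]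
    [AddCommGroup E] [AddCommGroup F]
    [Module k A] [Module k B] [Module k C] [Module k D] [Module k E] [Module k F]
    (f : A →ₗ[k] C →ₗ[k] E) (g : B →ₗ[k] D →ₗ[k] F)
    (a : A) (b : B) (c : C) (d : D) :
    tmul2 f g (a ⊗ₜ[k] b) (c ⊗ₜ[k] d) = f a c ⊗ₜ[k] g b d := by
  simp [tmul2]

/-- A monoidal Hom-Hopf algebra over a commutative ring `k`. -/
structure MonHomHopf (k H : Type*) [CommRing k] [AddCommGroup H] [Module k H] where
  α : H ≃ₗ[k] H
  mul : H →ₗ[k] H →ₗ[k] H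
  one : H
  comul : H →ₗ[k] H ⊗[k] H
  counit : H →ₗ[k] k
  S : H →ₗ[k] H
  alpha_mul : ∀ g h, α (mul g h) = mul (α g) (α h)
  alpha_one : α one = one
  hom_assoc : ∀ g h l, mul (α g) (mul h l) = mul (mul g h) (α l)
  mul_one' : ∀ h, mul h one = α h
  one_mul' : ∀ h, mul one h = α h
  comul_alpha : ∀ h, comul (α h)
    = TensorProduct.map α.toLinearMap α.toLinearMap (comul h)
  counit_alpha : ∀ h, counit (α h) = counit h
  hom_coassoc : ∀ h,
    (TensorProduct.assoc k H H H) ((TensorProduct.map comul α.symm.toLinearMap) (comul h))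
      = (TensorProduct.map α.symm.toLinearMap comul) (comul h)
  counit_comul_left : ∀ h,
    (TensorProduct.lid k H) ((TensorProduct.map counit LinearMap.id) (comul h)) = α.symm h
  counit_comul_right : ∀ h,
    (TensorProduct.rid k H) ((TensorProduct.map LinearMap.id counit) (comul h)) = α.symm h
  comul_mul : ∀ g h, comul (mul g h) = tmul2 mul mul (comul g) (comul h)
  comul_one : comul one = one ⊗ₜ[k] one
  counit_mul : ∀ g h, counit (mul g h) = counit g * counit h
  counit_one : counit one = 1
  antipode_left : ∀ h,
    (TensorProduct.lift mul) ((TensorProduct.map S LinearMap.id) (comul h)) = counit h • one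
  antipode_right : ∀ h,
    (TensorProduct.lift mul) ((TensorProduct.map LinearMap.id S) (comul h)) = counit h • one
  S_alpha : ∀ h, S (α h) = α (S h)

namespace MonHomHopf

variable {k H : Type*} [CommRing k] [AddCommGroup H] [Module k H] (A : MonHomHopf k H)

/-- `α` as a linear map. -/
noncomputable def aL : H →ₗ[k] H := A.α.toLinearMap
/-- `α⁻¹` as a linear map. -/
noncomputable def aI : H →ₗ[k] H := A.α.symm.toLinearMap

@[simp] lemma aL_apply (x : H) : A.aL x = A.α x := rfl
@[simp] lemma aI_apply (x : H) : A.aI x = A.α.symm x := rfl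

lemma aL_comp_aI : A.aL ∘ₗ A.aI = LinearMap.id := by
  ext x; simp

lemma aI_one : A.α.symm A.one = A.one := by
  apply A.α.injective
  rw [A.α.apply_symm_apply, A.alpha_one]

lemma S_aI (x : H) : A.S (A.α.symm x) = A.α.symm (A.S x) := by
  apply A.α.injective
  rw [← A.S_alpha, A.α.apply_symm_apply, A.α.apply_symm_apply]

lemma comul_S_alpha (x : H) :
    A.comul (A.S (A.α x)) = TensorProduct.map A.aL A.aL (A.comul (A.S x)) := by
  rw [A.S_alpha, A.comul_alpha]; rfl

/-- multiplication on the tensor product, uncurried -/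
noncomputable def mulT : H ⊗[k] H →ₗ[k] H := TensorProduct.lift A.mul

@[simp] lemma mulT_tmul (x y : H) : A.mulT (x ⊗ₜ[k] y) = A.mul x y := rfl

/-- `Σ ε(x₂) • α(x₁)` bilinear gadget -/
noncomputable def Beps : H →ₗ[k] H →ₗ[k] H :=
  (((LinearMap.lsmul k H) ∘ₗ A.counit).compl₂ A.aL).flip

@[simp] lemma Beps_apply (a b : H) : A.Beps a b = A.counit b • A.α a := rfl

lemma lift_Beps : TensorProduct.lift A.Beps
    = A.aL ∘ₗ (TensorProduct.rid k H).toLinearMap ∘ₗ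
        TensorProduct.map LinearMap.id A.counit := by
  apply TensorProduct.ext'
  intro a b
  simp

lemma eps_ar (x : H) : TensorProduct.lift A.Beps (A.comul x) = x := by
  rw [lift_Beps]
  simp only [LinearMap.comp_apply, LinearEquiv.coe_coe]
  rw [A.counit_comul_right]
  simp

/-- `w c = Σ c₁ S(c₂)` -/
noncomputable def wS : H →ₗ[k] H := A.mulT ∘ₗ (TensorProduct.map LinearMap.id A.S) ∘ₗ A.comul

lemma wS_eq (c : H) : A.wS c = A.counit c • A.one := A.antipode_right c

/-- collapse bilinear: `(a,b) ↦ Δ(S a) · Δ b` componentwise -/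
noncomputable def BL : H →ₗ[k] H →ₗ[k] H ⊗[k] H :=
  LinearMap.compl₂ ((tmul2 A.mul A.mul) ∘ₗ (A.comul ∘ₗ A.S)) A.comul

lemma lift_BL : TensorProduct.lift A.BL
    = A.comul ∘ₗ A.mulT ∘ₗ (TensorProduct.map A.S LinearMap.id) := by
  apply TensorProduct.ext'
  intro a b
  simp [BL, A.comul_mul]

lemma collapse (y : H) :
    TensorProduct.lift A.BL (A.comul y) = A.counit y • (A.one ⊗ₜ[k] A.one) := by
  rw [lift_BL]
  simp only [LinearMap.comp_apply, mulT]
  rw [A.antipode_left, map_smul, A.comul_one]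

/-- `g0 q c = (α⁻¹ c)(α⁻¹ q)` -/
noncomputable def g0 : H →ₗ[k] H →ₗ[k] H := ((A.mul ∘ₗ A.aI).compl₂ A.aI).flip

/-- `m1 t b = Σ (t₁ * b) ⊗ t₂` -/
noncomputable def m1 : (H ⊗[k] H) →ₗ[k] H →ₗ[k] H ⊗[k] H :=
  (tmul2 A.mul A.g0).compl₂ ((TensorProduct.mk k H H).flip A.one)

lemma m1_tmul (p q b : H) :
    A.m1 (p ⊗ₜ[k] q) b = (A.mul p b) ⊗ₜ[k] q := by
  simp [m1, g0, tmul2_tmul, A.aI_one, A.one_mul']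

/-- `Chi = Δ ∘ S ∘ α` -/
noncomputable def Chi : H →ₗ[k] H ⊗[k] H := A.comul ∘ₗ A.S ∘ₗ A.aL

/-- `FPhi a b = Σ (S(αa)₁ * b) ⊗ S(αa)₂` -/
noncomputable def FPhi : H →ₗ[k] H →ₗ[k] H ⊗[k] H := A.m1 ∘ₗ A.Chi

/-- `cS (c⊗d) = c * S d` -/
noncomputable def cS : H ⊗[k] H →ₗ[k] H := A.mulT ∘ₗ (TensorProduct.map LinearMap.id A.S)

@[simp] lemma cS_tmul (c d : H) : A.cS (c ⊗ₜ[k] d) = A.mul c (A.S d) := rfl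

noncomputable def g2 : H →ₗ[k] H →ₗ[k] H := A.mul ∘ₗ A.aI

noncomputable def Umap : (H ⊗[k] H) ⊗[k] (H ⊗[k] H) →ₗ[k] H ⊗[k] H :=
  (TensorProduct.map A.mulT (TensorProduct.lift A.g2)) ∘ₗ
    (TensorProduct.tensorTensorTensorComm k H H H H).toLinearMap

lemma Umap_tmul (p q u v : H) :
    A.Umap ((p ⊗ₜ[k] q) ⊗ₜ[k] (u ⊗ₜ[k] v))
      = (A.mul p u) ⊗ₜ[k] (A.mul (A.α.symm q) v) := by
  simp [Umap, g2]

noncomputable def Wmap : H ⊗[k] (H ⊗[k] (H ⊗[k] H)) →ₗ[k] H ⊗[k] H :=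
  A.Umap ∘ₗ (TensorProduct.map A.Chi (TensorProduct.map A.aL A.cS))

noncomputable def gm : H ⊗[k] H →ₗ[k] H ⊗[k] (H ⊗[k] H) :=
  (TensorProduct.map A.aL LinearMap.id) ∘ₗ (TensorProduct.assoc k H H H).toLinearMap
    ∘ₗ (TensorProduct.map A.comul A.aI)

noncomputable def Ymap : H ⊗[k] (H ⊗[k] H) →ₗ[k] H ⊗[k] H :=
  A.Wmap ∘ₗ (TensorProduct.map LinearMap.id A.gm) ∘ₗ (TensorProduct.map A.aL LinearMap.id)

lemma KA : A.m1 = (TensorProduct.curry A.Umap).compl₂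
    ((TensorProduct.map A.aL (A.cS ∘ₗ A.comul)) ∘ₗ A.comul) := by
  apply TensorProduct.ext'
  intro p q
  apply LinearMap.ext
  intro b
  have hmaps : (((TensorProduct.mk k H H).flip q) ∘ₗ (A.mul p)) ∘ₗ
      TensorProduct.lift A.Beps
      = (TensorProduct.curry A.Umap (p ⊗ₜ[k] q)) ∘ₗ
        (TensorProduct.map A.aL (A.cS ∘ₗ A.comul)) := by
    apply TensorProduct.ext'
    intro b1 b2
    have hw : (A.cS ∘ₗ A.comul) b2 = A.counit b2 • A.one := A.wS_eq b2
    simp only [LinearMap.comp_apply, TensorProduct.lift.tmul, Beps_apply,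
      TensorProduct.map_tmul, TensorProduct.curry_apply, hw, aL_apply]
    rw [TensorProduct.tmul_smul, TensorProduct.tmul_smul,
      LinearMap.map_smul A.Umap, A.Umap_tmul, A.mul_one', A.α.apply_symm_apply]
    rw [LinearMap.map_smul (A.mul p), LinearMap.map_smul ((TensorProduct.mk k H H).flip q)]; rfl
  calc A.m1 (p ⊗ₜ[k] q) b = (A.mul p b) ⊗ₜ[k] q := A.m1_tmul p q b
    _ = (((TensorProduct.mk k H H).flip q) ∘ₗ (A.mul p))
          (TensorProduct.lift A.Beps (A.comul b)) := by rw [A.eps_ar b]; rfl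
    _ = (TensorProduct.curry A.Umap (p ⊗ₜ[k] q))
          ((TensorProduct.map A.aL (A.cS ∘ₗ A.comul)) (A.comul b)) := by
          rw [← LinearMap.comp_apply, hmaps, LinearMap.comp_apply]
    _ = _ := rfl

lemma ST2 : TensorProduct.lift A.FPhi
    = A.Wmap ∘ₗ (TensorProduct.map LinearMap.id
        ((TensorProduct.map LinearMap.id A.comul) ∘ₗ A.comul)) := by
  apply TensorProduct.ext'
  intro a b
  simp only [TensorProduct.lift.tmul, LinearMap.comp_apply, TensorProduct.map_tmul,
    LinearMap.id_apply, FPhi, Wmap]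
  rw [A.KA]
  simp only [LinearMap.compl₂_apply, TensorProduct.curry_apply, LinearMap.comp_apply]
  congr 1
  rw [← LinearMap.comp_apply (TensorProduct.map A.aL A.cS), ← TensorProduct.map_comp,
    LinearMap.comp_id]

lemma coassocK : (TensorProduct.map LinearMap.id A.comul) ∘ₗ A.comul
    = A.gm ∘ₗ A.comul := by
  apply LinearMap.ext
  intro x
  have hc : (TensorProduct.assoc k H H H)
      ((TensorProduct.map A.comul A.aI) (A.comul x))
      = (TensorProduct.map A.aI A.comul) (A.comul x) := A.hom_coassoc x
  simp only [LinearMap.comp_apply, gm, LinearEquiv.coe_coe]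
  rw [hc, ← LinearMap.comp_apply (TensorProduct.map A.aL LinearMap.id),
    ← TensorProduct.map_comp, A.aL_comp_aI, LinearMap.id_comp]

noncomputable def a2L : H →ₗ[k] H := A.aL ∘ₗ A.aL

@[simp] lemma a2L_apply (x : H) : A.a2L x = A.α (A.α x) := rfl

lemma Chi_alpha (x : H) :
    A.Chi (A.α x) = TensorProduct.map A.a2L A.a2L (A.comul (A.S x)) := by
  have h1 : A.Chi (A.α x) = A.comul (A.S (A.α (A.α x))) := rfl
  rw [h1, A.comul_S_alpha (A.α x), A.comul_S_alpha x,
    ← LinearMap.comp_apply (TensorProduct.map A.aL A.aL), ← TensorProduct.map_comp]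
  rfl

noncomputable def Qy (y : H) : H ⊗[k] H →ₗ[k] H ⊗[k] H :=
  (TensorProduct.map A.aL A.cS) ∘ₗ (TensorProduct.map A.aL LinearMap.id)
    ∘ₗ (TensorProduct.assoc k H H H).toLinearMap
    ∘ₗ ((TensorProduct.mk k (H ⊗[k] H) H).flip (A.α.symm y))

lemma Qy_tmul (y u v : H) :
    A.Qy y (u ⊗ₜ[k] v) = A.a2L u ⊗ₜ[k] A.mul v (A.S (A.α.symm y)) := by
  simp [Qy]

lemma MEQ' (y : H) : A.Umap ∘ₗ (TensorProduct.map (TensorProduct.map A.a2L A.a2L) (A.Qy y))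
    = (TensorProduct.map LinearMap.id (A.mul.flip (A.S y)))
        ∘ₗ (TensorProduct.map A.a2L LinearMap.id)
        ∘ₗ (TensorProduct.map A.mulT A.mulT)
        ∘ₗ (TensorProduct.tensorTensorTensorComm k H H H H).toLinearMap := by
  apply TensorProduct.ext'
  intro z w
  induction z using TensorProduct.induction_on with
  | zero => simp
  | add z1 z2 h1 h2 =>
      simp only [TensorProduct.add_tmul, map_add] at *
      rw [h1, h2]
  | tmul s t =>
      induction w using TensorProduct.induction_on with
      | zero => simp
      | add w1 w2 h1 h2 =>
          simp only [TensorProduct.tmul_add, map_add] at *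
          rw [h1, h2]
      | tmul u v =>
          simp only [LinearMap.comp_apply, TensorProduct.map_tmul, LinearEquiv.coe_coe,
            TensorProduct.tensorTensorTensorComm_tmul, LinearMap.id_apply,
            LinearMap.flip_apply, A.Qy_tmul]
          rw [A.Umap_tmul]
          simp only [mulT_tmul, a2L_apply]
          rw [A.α.symm_apply_apply]
          congr 1
          · rw [← A.alpha_mul, ← A.alpha_mul]
          · rw [A.hom_assoc, A.S_aI, A.α.apply_symm_apply]

lemma MEQ (y : H) : A.Ymap ∘ₗ (TensorProduct.assoc k H H H).toLinearMap
      ∘ₗ ((TensorProduct.mk k (H ⊗[k] H) H).flip y)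
    = (TensorProduct.map LinearMap.id (A.mul.flip (A.S y)))
        ∘ₗ (TensorProduct.map A.a2L LinearMap.id) ∘ₗ TensorProduct.lift A.BL := by
  apply TensorProduct.ext'
  intro x u
  have h := LinearMap.congr_fun (A.MEQ' y) ((A.comul (A.S x)) ⊗ₜ[k] (A.comul u))
  simp only [LinearMap.comp_apply, TensorProduct.map_tmul, LinearEquiv.coe_coe] at h
  simp only [LinearMap.comp_apply, LinearMap.flip_apply, TensorProduct.mk_apply,
    LinearEquiv.coe_coe, TensorProduct.assoc_tmul, Ymap, Wmap, TensorProduct.map_tmul,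
    LinearMap.id_apply, aL_apply]
  rw [A.Chi_alpha]
  have hq : (TensorProduct.map A.aL A.cS) (A.gm (u ⊗ₜ[k] y)) = A.Qy y (A.comul u) := by
    simp [gm, Qy]
  rw [hq, h]
  have hbl : TensorProduct.lift A.BL (x ⊗ₜ[k] u)
      = (TensorProduct.map A.mulT A.mulT)
          ((TensorProduct.tensorTensorTensorComm k H H H H)
            ((A.comul (A.S x)) ⊗ₜ[k] (A.comul u))) := by
    simp only [TensorProduct.lift.tmul, BL, LinearMap.compl₂_apply, LinearMap.comp_apply]
    rfl
  rw [hbl]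

/-- `C1 a b = ε(a) • (1 ⊗ S b)` -/
noncomputable def C1 : H →ₗ[k] H →ₗ[k] H ⊗[k] H :=
  ((LinearMap.lsmul k (H ⊗[k] H)) ∘ₗ A.counit).compl₂
    ((TensorProduct.mk k H H A.one) ∘ₗ A.S)

@[simp] lemma C1_apply (a b : H) :
    A.C1 a b = A.counit a • (A.one ⊗ₜ[k] A.S b) := rfl

lemma YC : A.Ymap ∘ₗ (TensorProduct.assoc k H H H).toLinearMap
      ∘ₗ (TensorProduct.map A.comul A.aI)
    = TensorProduct.lift A.C1 := by
  apply TensorProduct.ext'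
  intro a b
  have h := LinearMap.congr_fun (A.MEQ (A.α.symm b)) (A.comul a)
  simp only [LinearMap.comp_apply, LinearMap.flip_apply, TensorProduct.mk_apply] at h
  simp only [LinearMap.comp_apply, TensorProduct.map_tmul, aI_apply,
    TensorProduct.lift.tmul, C1_apply]
  rw [h, A.collapse]
  simp only [map_smul, TensorProduct.map_tmul, LinearMap.id_apply, a2L_apply,
    LinearMap.flip_apply, A.alpha_one]
  rw [A.one_mul', A.S_aI, A.α.apply_symm_apply]

lemma liftC1_comul (h : H) :
    TensorProduct.lift A.C1 (A.comul h) = A.one ⊗ₜ[k] A.S (A.α.symm h) := by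
  have hm : TensorProduct.lift A.C1
      = ((TensorProduct.mk k H H A.one) ∘ₗ A.S)
          ∘ₗ (TensorProduct.lid k H).toLinearMap
          ∘ₗ (TensorProduct.map A.counit LinearMap.id) := by
    apply TensorProduct.ext'
    intro a b
    simp [TensorProduct.lid_tmul]
  rw [hm]
  simp only [LinearMap.comp_apply, LinearEquiv.coe_coe]
  rw [A.counit_comul_left]
  rfl

theorem KEY (h : H) :
    TensorProduct.lift A.FPhi (A.comul h) = A.one ⊗ₜ[k] A.S (A.α.symm h) := by
  rw [A.ST2]
  have hsplit : (TensorProduct.map (LinearMap.id : H →ₗ[k] H) A.gm)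
        ∘ₗ (TensorProduct.map (LinearMap.id : H →ₗ[k] H) A.comul)
      = TensorProduct.map LinearMap.id (A.gm ∘ₗ A.comul) := by
    rw [← TensorProduct.map_comp, LinearMap.id_comp]
  rw [LinearMap.comp_apply, A.coassocK, ← hsplit]
  have hc := LinearMap.congr_fun A.coassocK h
  simp only [LinearMap.comp_apply] at hc ⊢
  rw [hc]
  have hgm : A.gm (A.comul h)
      = (TensorProduct.map A.aL LinearMap.id)
          ((TensorProduct.assoc k H H H).toLinearMap
            ((TensorProduct.map A.comul A.aI) (A.comul h))) := rfl
  rw [hgm]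
  have hY : A.Wmap ((TensorProduct.map LinearMap.id A.gm)
        ((TensorProduct.map A.aL LinearMap.id)
          ((TensorProduct.assoc k H H H).toLinearMap
            ((TensorProduct.map A.comul A.aI) (A.comul h)))))
      = (A.Ymap ∘ₗ (TensorProduct.assoc k H H H).toLinearMap
          ∘ₗ (TensorProduct.map A.comul A.aI)) (A.comul h) := rfl
  rw [hY, A.YC, A.liftC1_comul]

end MonHomHopf

/-- A left-covariant `(H,α)`-Hom-bimodule. -/
structure LeftCovBimod {k H : Type*} [CommRing k] [AddCommGroup H] [Module k H]
    (A : MonHomHopf k H) (M : Type*) [AddCommGroup M] [Module k M] where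
  μ : M ≃ₗ[k] M
  lact : H →ₗ[k] M →ₗ[k] M
  ract : M →ₗ[k] H →ₗ[k] M
  lact_assoc : ∀ g h m, lact (A.α g) (lact h m) = lact (A.mul g h) (μ m)
  lact_one : ∀ m, lact A.one m = μ m
  mu_lact : ∀ h m, μ (lact h m) = lact (A.α h) (μ m)
  ract_assoc : ∀ m g h, ract (μ m) (A.mul g h) = ract (ract m g) (A.α h)
  ract_one : ∀ m, ract m A.one = μ m
  mu_ract : ∀ m h, μ (ract m h) = ract (μ m) (A.α h)
  bimod : ∀ h m g, ract (lact h m) (A.α g) = lact (A.α h) (ract m g)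
  rho : M →ₗ[k] H ⊗[k] M
  rho_coassoc : ∀ m,
    (TensorProduct.map (LinearMap.id : H →ₗ[k] H) rho) (rho m)
      = (TensorProduct.assoc k H H M)
          ((TensorProduct.map
              ((TensorProduct.map A.α.toLinearMap (LinearMap.id : H →ₗ[k] H)) ∘ₗ A.comul)
              μ.symm.toLinearMap) (rho m))
  rho_counit : ∀ m,
    (TensorProduct.lid k M) ((TensorProduct.map A.counit (LinearMap.id : M →ₗ[k] M)) (rho m))
      = μ.symm m
  rho_mu : ∀ m, rho (μ m) = TensorProduct.map A.α.toLinearMap μ.toLinearMap (rho m)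
  rho_cov : ∀ h g m,
    rho (ract (lact h m) (A.α g))
      = tmul2 A.mul lact (A.comul (A.α h)) (tmul2 A.mul ract (rho m) (A.comul g))

/-- The projection `P_L(m) = S(m₍₋₁₎) · m₍₀₎`. -/
noncomputable def LeftCovBimod.PL {k H : Type*} [CommRing k] [AddCommGroup H] [Module k H]
    {A : MonHomHopf k H} {M : Type*} [AddCommGroup M] [Module k M]
    (B : LeftCovBimod A M) : M →ₗ[k] M :=
  (TensorProduct.lift (B.lact ∘ₗ A.S)) ∘ₗ B.rho

namespace LeftCovBimod

variable {k H : Type*} [CommRing k] [AddCommGroup H] [Module k H]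
  {A : MonHomHopf k H} {M : Type*} [AddCommGroup M] [Module k M]
  (B : LeftCovBimod A M)

noncomputable def actM : H ⊗[k] M →ₗ[k] M := TensorProduct.lift B.lact
noncomputable def muL : M →ₗ[k] M := B.μ.toLinearMap
noncomputable def muI : M →ₗ[k] M := B.μ.symm.toLinearMap

@[simp] lemma actM_tmul (h : H) (x : M) : B.actM (h ⊗ₜ[k] x) = B.lact h x := rfl
@[simp] lemma muL_apply (x : M) : B.muL x = B.μ x := rfl
@[simp] lemma muI_apply (x : M) : B.muI x = B.μ.symm x := rfl

lemma SA : (tmul2 A.mul B.ract).flip (A.one ⊗ₜ[k] A.one)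
    = TensorProduct.map A.aL B.muL := by
  apply TensorProduct.ext'
  intro a x
  simp [tmul2_tmul, A.mul_one', B.ract_one]

lemma SB : ((tmul2 A.mul B.lact) ∘ₗ (TensorProduct.map A.aL A.aL)).compl₂
      (TensorProduct.map A.aL B.muL)
    = (tmul2 A.mul B.lact).compr₂ (TensorProduct.map A.aL B.muL) := by
  apply TensorProduct.ext'
  intro a b
  apply TensorProduct.ext'
  intro c x
  simp only [LinearMap.compl₂_apply, LinearMap.compr₂_apply, LinearMap.comp_apply,
    TensorProduct.map_tmul, tmul2_tmul, MonHomHopf.aL_apply, muL_apply]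
  rw [← A.alpha_mul, ← B.mu_lact]

lemma M1 : B.rho ∘ₗ B.actM
    = TensorProduct.lift (((tmul2 A.mul B.lact) ∘ₗ A.comul).compl₂ B.rho) := by
  have hme : TensorProduct.map A.aL B.muL
      = (TensorProduct.congr A.α B.μ).toLinearMap := by
    apply TensorProduct.ext'
    intro a x
    simp [TensorProduct.congr_tmul]
  have hinj : Function.Injective (TensorProduct.map A.aL B.muL) := by
    rw [hme]; exact (TensorProduct.congr A.α B.μ).injective
  have hcomp : (TensorProduct.map A.aL B.muL) ∘ₗ (B.rho ∘ₗ B.actM)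
      = (TensorProduct.map A.aL B.muL) ∘ₗ
        TensorProduct.lift (((tmul2 A.mul B.lact) ∘ₗ A.comul).compl₂ B.rho) := by
    apply TensorProduct.ext'
    intro h n
    simp only [LinearMap.comp_apply, actM_tmul, TensorProduct.lift.tmul,
      LinearMap.compl₂_apply, MonHomHopf.aL, muL]
    rw [← B.rho_mu, ← B.ract_one (B.lact h n), ← A.alpha_one, B.rho_cov h A.one n,
      A.comul_one]
    have hsa := LinearMap.congr_fun B.SA (B.rho n)
    simp only [LinearMap.flip_apply, MonHomHopf.aL, muL] at hsa
    rw [hsa, A.comul_alpha h]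
    have hsb := LinearMap.congr_fun (LinearMap.congr_fun B.SB (A.comul h)) (B.rho n)
    simp only [LinearMap.compl₂_apply, LinearMap.compr₂_apply, LinearMap.comp_apply,
      MonHomHopf.aL, muL] at hsb
    exact hsb
  apply LinearMap.ext
  intro z
  exact hinj (LinearMap.congr_fun hcomp z)

/-- `G2 a w = Δ(S a) ⊙ w` -/
noncomputable def G2 : H →ₗ[k] (H ⊗[k] M) →ₗ[k] H ⊗[k] M :=
  (tmul2 A.mul B.lact) ∘ₗ (A.comul ∘ₗ A.S)

lemma T1 (b : H) (y : M) : (tmul2 A.mul B.lact).flip (b ⊗ₜ[k] y)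
    = (TensorProduct.map LinearMap.id (B.lact.flip y)) ∘ₗ (A.m1.flip b) := by
  apply TensorProduct.ext'
  intro p q
  simp only [LinearMap.flip_apply, LinearMap.comp_apply, tmul2_tmul]
  rw [A.m1_tmul]
  simp

lemma SC1 (y : M) : (TensorProduct.lift B.G2)
      ∘ₗ (TensorProduct.assoc k H H M).toLinearMap
      ∘ₗ ((TensorProduct.mk k (H ⊗[k] H) M).flip y)
    = (TensorProduct.map LinearMap.id (B.lact.flip y))
        ∘ₗ (TensorProduct.lift (A.m1 ∘ₗ (A.comul ∘ₗ A.S))) := by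
  apply TensorProduct.ext'
  intro a b
  simp only [LinearMap.comp_apply, LinearMap.flip_apply, TensorProduct.mk_apply,
    LinearEquiv.coe_coe, TensorProduct.assoc_tmul, TensorProduct.lift.tmul, G2]
  have ht := LinearMap.congr_fun (B.T1 b y) (A.comul (A.S a))
  simp only [LinearMap.flip_apply, LinearMap.comp_apply] at ht
  exact ht

lemma SC2 (h : H) (x : M) :
    B.μ.symm (B.lact h x) = B.lact (A.α.symm h) (B.μ.symm x) := by
  apply B.μ.injective
  rw [B.μ.apply_symm_apply, B.mu_lact, A.α.apply_symm_apply, B.μ.apply_symm_apply]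

lemma FIN : (TensorProduct.lift B.G2) ∘ₗ (TensorProduct.assoc k H H M).toLinearMap
      ∘ₗ (TensorProduct.map
            ((TensorProduct.map A.α.toLinearMap (LinearMap.id : H →ₗ[k] H)) ∘ₗ A.comul)
            B.μ.symm.toLinearMap)
    = (TensorProduct.mk k H M A.one)
        ∘ₗ (TensorProduct.lift (B.lact ∘ₗ (A.S ∘ₗ A.aI)))
        ∘ₗ (TensorProduct.map LinearMap.id B.μ.symm.toLinearMap) := by
  apply TensorProduct.ext'
  intro a x
  simp only [LinearMap.comp_apply, TensorProduct.map_tmul, LinearMap.id_apply,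
    LinearEquiv.coe_coe]
  have hs := LinearMap.congr_fun (B.SC1 (B.μ.symm x))
      ((TensorProduct.map A.α.toLinearMap LinearMap.id) (A.comul a))
  simp only [LinearMap.comp_apply, LinearMap.flip_apply, TensorProduct.mk_apply,
    LinearEquiv.coe_coe] at hs
  rw [hs]
  have hl : TensorProduct.lift (A.m1 ∘ₗ (A.comul ∘ₗ A.S))
        ∘ₗ (TensorProduct.map A.α.toLinearMap LinearMap.id)
      = TensorProduct.lift A.FPhi := by
    rw [TensorProduct.lift_comp_map, LinearMap.compl₂_id]
    rfl
  have hl2 := LinearMap.congr_fun hl (A.comul a)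
  simp only [LinearMap.comp_apply] at hl2
  rw [hl2, A.KEY a]
  simp

end LeftCovBimod

/-- `P_L(m)` is a left Hom-coinvariant for every `m`. -/
theorem PL_coinvariant {k H : Type*} [CommRing k] [AddCommGroup H] [Module k H]
    (A : MonHomHopf k H) {M : Type*} [AddCommGroup M] [Module k M]
    (B : LeftCovBimod A M) :
    ∀ m : M, B.rho (B.PL m) = A.one ⊗ₜ[k] (B.μ.symm (B.PL m)) := by
  intro m
  have hact : TensorProduct.lift (B.lact ∘ₗ A.S)
      = B.actM ∘ₗ (TensorProduct.map A.S LinearMap.id) := by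
    apply TensorProduct.ext'
    intro h x
    simp [LeftCovBimod.actM]
  have hPLdef : B.PL m = B.actM ((TensorProduct.map A.S LinearMap.id) (B.rho m)) := by
    simp only [LeftCovBimod.PL, LinearMap.comp_apply, hact]
  have h1 := LinearMap.congr_fun B.M1 ((TensorProduct.map A.S LinearMap.id) (B.rho m))
  simp only [LinearMap.comp_apply] at h1
  have h2 : (TensorProduct.lift (((tmul2 A.mul B.lact) ∘ₗ A.comul).compl₂ B.rho))
        ∘ₗ (TensorProduct.map A.S LinearMap.id)
      = (TensorProduct.lift B.G2) ∘ₗ (TensorProduct.map LinearMap.id B.rho) := by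
    apply TensorProduct.ext'
    intro h n
    simp [LeftCovBimod.G2]
  have h2' := LinearMap.congr_fun h2 (B.rho m)
  simp only [LinearMap.comp_apply] at h2'
  have h3 : (TensorProduct.map (LinearMap.id : H →ₗ[k] H) B.rho) (B.rho m)
      = (TensorProduct.assoc k H H M).toLinearMap
          ((TensorProduct.map
              ((TensorProduct.map A.α.toLinearMap (LinearMap.id : H →ₗ[k] H)) ∘ₗ A.comul)
              B.μ.symm.toLinearMap) (B.rho m)) := B.rho_coassoc m
  have h4 := LinearMap.congr_fun B.FIN (B.rho m)
  simp only [LinearMap.comp_apply] at h4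
  have h5 : (TensorProduct.lift (B.lact ∘ₗ (A.S ∘ₗ A.aI)))
        ((TensorProduct.map LinearMap.id B.μ.symm.toLinearMap) (B.rho m))
      = B.μ.symm (B.PL m) := by
    have h5m : (TensorProduct.lift (B.lact ∘ₗ (A.S ∘ₗ A.aI)))
          ∘ₗ (TensorProduct.map LinearMap.id B.μ.symm.toLinearMap)
        = B.μ.symm.toLinearMap ∘ₗ B.actM ∘ₗ (TensorProduct.map A.S LinearMap.id) := by
      apply TensorProduct.ext'
      intro a x
      simp only [LinearMap.comp_apply, TensorProduct.map_tmul, LinearMap.id_apply,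
        LinearEquiv.coe_coe, TensorProduct.lift.tmul, LeftCovBimod.actM_tmul,
        MonHomHopf.aI_apply]
      rw [B.SC2, A.S_aI]
    have := LinearMap.congr_fun h5m (B.rho m)
    simp only [LinearMap.comp_apply, LinearEquiv.coe_coe] at this
    rw [this, hPLdef]
  rw [hPLdef, h1, h2', h3, h4, h5, ← hPLdef]
  rfl
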